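/- Let A be a linear map on a normed vector space, b a vector, x a vector with residual r = b - A x, and let x' = x + e be a perturbation. If ‖A e‖ ≤ eb * ‖A x‖ for some eb ≥ 0, then the new residual r' = b - A x' satisfies ‖r'‖ ≤ (1 + eb) * ‖r‖ + eb * ‖b‖. -/

import Mathlib

theorem norm_sub_add_le_of_norm_le_mul {F : Type*} [SeminormedAddCommGroup F] {b y d : F}
    {ε : ℝ} (hε : 0 ≤ ε) (hd : ‖d‖ ≤ ε * ‖y‖) :
    ‖b - (y + d)‖ ≤ (1 + ε) * ‖b - y‖ + ε * ‖b‖ := by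
  have hy : ‖y‖ ≤ ‖b‖ + ‖b - y‖ := norm_le_norm_add_norm_sub b y
  calc ‖b - (y + d)‖ = ‖(b - y) - d‖ := by rw [sub_add_eq_sub_sub]
    _ ≤ ‖b - y‖ + ‖d‖ := norm_sub_le _ _
    _ ≤ ‖b - y‖ + ε * (‖b‖ + ‖b - y‖) := by gcongr; exact hd.trans (by gcongr)
    _ = (1 + ε) * ‖b - y‖ + ε * ‖b‖ := by ring

theorem stmt_8 {E : Type*} [NormedAddCommGroup E] [NormedSpace ℝ E]
    (A : E →ₗ[ℝ] E) (b x e : E) (eb : ℝ) (heb : 0 ≤ eb)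
    (hAe : ‖A e‖ ≤ eb * ‖A x‖) :
    ‖b - A (x + e)‖ ≤ (1 + eb) * ‖b - A x‖ + eb * ‖b‖ := by
  rw [map_add]
  exact norm_sub_add_le_of_norm_le_mul heb hAe
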